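/- arXiv:2406.09373 — 3 statements merged into one kernel-verified Lean document; each statement's English description precedes it below -/
import Mathlib

section
/- For every i ≥ 0, each coefficient of the i-th normalized (probabilists') Hermite polynomial H_i is bounded by 2^i in absolute value, where the H_i are normalized so that E_{x∼N(0,1)}[H_i(x)^2] = 1 and satisfy H_0(x)=1, H_1(x)=x, and H_{i+1}(x)·√((i+1)!) = x·H_i(x)·√(i!) − i·H_{i−1}(x)·√((i−1)!). -/
theorem stmt1 (H : ℕ → Polynomial ℝ)
    (h0 : H 0 = 1) (h1 : H 1 = Polynomial.X)
    (hnorm : ∀ i : ℕ, ∫ x, (Polynomial.eval x (H i)) ^ 2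
        ∂(ProbabilityTheory.gaussianReal 0 1) = 1)
    (hrec : ∀ i : ℕ,
      (Real.sqrt (Nat.factorial (i + 2))) • H (i + 2) =
        Polynomial.X * ((Real.sqrt (Nat.factorial (i + 1))) • H (i + 1))
          - ((i : ℝ) + 1) • ((Real.sqrt (Nat.factorial i)) • H i)) :
    ∀ i n, |(H i).coeff n| ≤ 2 ^ i := by
  intro i
  induction i using Nat.strong_induction_on with
  | _ i ih =>
    match i with
    | 0 =>
      intro n
      rw [h0]
      rcases n with _ | n <;> simp [Polynomial.coeff_one]
    | 1 =>
      intro n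
      rw [h1]
      rcases n with _ | n
      · simp
      · rcases n with _ | n <;> simp [Polynomial.coeff_X] <;> norm_num
    | (i + 2) =>
      intro n
      have key := hrec i
      set s0 := Real.sqrt (Nat.factorial i) with hs0
      set s1 := Real.sqrt (Nat.factorial (i+1)) with hs1
      set s2 := Real.sqrt (Nat.factorial (i+2)) with hs2
      have hs2pos : (0:ℝ) < s2 := Real.sqrt_pos.mpr (by positivity)
      have hs1nn : (0:ℝ) ≤ s1 := Real.sqrt_nonneg _
      have hcoeff : s2 * (H (i+2)).coeff n
          = (Polynomial.X * (s1 • H (i+1))).coeff n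
            - ((i:ℝ)+1) * (s0 * (H i).coeff n) := by
        have := congrArg (fun p => Polynomial.coeff p n) key
        simpa [Polynomial.coeff_smul, smul_eq_mul, mul_assoc] using this
      -- bound the X-mul coefficient
      have hX : |(Polynomial.X * (s1 • H (i+1))).coeff n| ≤ s1 * 2 ^ (i+1) := by
        rcases n with _ | m
        · simp [Polynomial.mul_coeff_zero]
          positivity
        · rw [Polynomial.coeff_X_mul, Polynomial.coeff_smul, smul_eq_mul, abs_mul,
            abs_of_nonneg hs1nn]
          exact mul_le_mul_of_nonneg_left (ih (i+1) (by omega) m) hs1nn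
      have hI : |((i:ℝ)+1) * (s0 * (H i).coeff n)| ≤ ((i:ℝ)+1) * s0 * 2 ^ i := by
        have h0nn : (0:ℝ) ≤ s0 := Real.sqrt_nonneg _
        rw [abs_mul, abs_mul, abs_of_nonneg (by positivity : (0:ℝ) ≤ (i:ℝ)+1),
          abs_of_nonneg h0nn, mul_assoc]
        gcongr
        exact ih i (by omega) n
      have hle1 : s1 ≤ s2 := by
        apply Real.sqrt_le_sqrt
        exact_mod_cast Nat.factorial_le (by omega)
      have hle2 : ((i:ℝ)+1) * s0 ≤ s2 := by
        have : ((i:ℝ)+1) * s0 = Real.sqrt (((i:ℝ)+1)^2 * (Nat.factorial i)) := by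
          rw [Real.sqrt_mul (by positivity), Real.sqrt_sq (by positivity)]
        rw [this, hs2]
        apply Real.sqrt_le_sqrt
        have : ((Nat.factorial (i+2) : ℝ)) = ((i:ℝ)+2) * (((i:ℝ)+1) * (Nat.factorial i)) := by
          rw [Nat.factorial_succ, Nat.factorial_succ]
          push_cast
          ring
        rw [this]
        nlinarith [Nat.one_le_iff_ne_zero.mpr (Nat.factorial_ne_zero i),
          (by exact_mod_cast Nat.one_le_iff_ne_zero.mpr (Nat.factorial_ne_zero i) : (1:ℝ) ≤ (Nat.factorial i : ℝ))]
      have hmain : |s2 * (H (i+2)).coeff n| ≤ s2 * 2 ^ (i+2) := by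
        rw [hcoeff]
        calc |(Polynomial.X * (s1 • H (i+1))).coeff n - ((i:ℝ)+1) * (s0 * (H i).coeff n)|
            ≤ |(Polynomial.X * (s1 • H (i+1))).coeff n| + |((i:ℝ)+1) * (s0 * (H i).coeff n)| :=
              abs_sub _ _
          _ ≤ s1 * 2 ^ (i+1) + ((i:ℝ)+1) * s0 * 2 ^ i := add_le_add hX hI
          _ ≤ s2 * 2 ^ (i+1) + s2 * 2 ^ i := by
              gcongr <;> positivity
          _ ≤ s2 * 2 ^ (i+2) := by
              have hnn : (0:ℝ) ≤ s2 := le_of_lt hs2pos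
              rw [pow_succ, pow_succ, pow_succ]
              nlinarith [mul_nonneg hnn (le_of_lt (pow_pos (by norm_num : (0:ℝ) < 2) i))]
      rw [abs_mul, abs_of_pos hs2pos] at hmain
      exact le_of_mul_le_mul_left hmain hs2pos
end

section
/- Let F, F̂ : ℝ^k → {±1}, let R ≥ 1, ρ ∈ (0,1), β ∈ (0,1), and suppose F is (R,ρ)-locally β-balanced, i.e., for every x with ‖x‖₂ ≤ R and every ρ' ≤ ρ, P_{z∼N(0,I_k)}[F(z)=F(x) | z ∈ B(x,ρ')] > β. Suppose P_{z∼N(0,I_k)}[F(z) ≠ F̂(z)] ≤ γ where γ = β · inf_{‖x‖₂≤R} P_{z∼N(0,I_k)}[z ∈ B(x,ρ)]. Then for every x with ‖x‖₂ ≤ R and F(x) ≠ F̂(x), the point x lies in the ρ-boundary of F̂, i.e., there exists z with ‖z‖₂ ≤ ρ and F̂(x+z) ≠ F̂(x). -/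
/-!
Suppose `Fhat` were constant on `closedBall x ρ` while `F x ≠ Fhat x`. Then every point of the
ball where `F` takes the value `F x` is a point where `F` and `Fhat` disagree. By local balance
these points carry more than `β` times the Gaussian mass of the ball, which is at least `γ`;
this contradicts the disagreement bound.
-/

open MeasureTheory

/-- The standard Gaussian measure `N(0, I_k)` on `ℝ^k`. -/
noncomputable def stdGaussian (k : ℕ) : Measure (EuclideanSpace ℝ (Fin k)) :=
  (Measure.pi fun _ : Fin k => ProbabilityTheory.gaussianReal 0 1).map
    (MeasurableEquiv.toLp 2 (Fin k → ℝ))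

instance isProbabilityMeasure_stdGaussian (k : ℕ) : IsProbabilityMeasure (stdGaussian k) :=
  Measure.isProbabilityMeasure_map (MeasurableEquiv.measurable _).aemeasurable

lemma mul_lt_of_nonneg_of_lt_div {β a b : ℝ} (hβ : 0 ≤ β) (hb : 0 ≤ b) (h : β < a / b) :
    β * b < a := by
  rcases hb.eq_or_lt with rfl | hb
  · rw [div_zero] at h
    exact absurd h hβ.not_gt
  · exact (lt_div_iff₀ hb).mp h

lemma closedBall_inter_level_subset_disagreement {E α : Type*} [SeminormedAddCommGroup E]
    {f g : E → α} {x : E} {ρ : ℝ} (hg : ∀ z, ‖z‖ ≤ ρ → g (x + z) = g x) (hx : f x ≠ g x) :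
    Metric.closedBall x ρ ∩ {z | f z = f x} ⊆ {z | f z ≠ g z} := by
  rintro z ⟨hz, hfz : f z = f x⟩
  have hgz : g z = g x := by
    simpa using hg (z - x) (by simpa [dist_eq_norm] using hz)
  show f z ≠ g z
  rwa [hfz, hgz]

theorem stmt10_general (k : ℕ) (F Fhat : EuclideanSpace ℝ (Fin k) → ℝ)
    (R ρ β : ℝ) (hρ : ρ ∈ Set.Ioo (0 : ℝ) 1) (hβ : β ∈ Set.Ioo (0 : ℝ) 1)
    -- `F` is `(R, ρ)`-locally `β`-balanced
    (hbal : ∀ x : EuclideanSpace ℝ (Fin k), ‖x‖ ≤ R → ∀ ρ', 0 < ρ' → ρ' ≤ ρ →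
      β < ((stdGaussian k) (Metric.closedBall x ρ' ∩ {z | F z = F x})).toReal
            / ((stdGaussian k) (Metric.closedBall x ρ')).toReal)
    -- the disagreement between `F` and `Fhat` is at most `γ`
    (hdis : ((stdGaussian k) {z | F z ≠ Fhat z}).toReal
      ≤ β * ⨅ x : {x : EuclideanSpace ℝ (Fin k) // ‖x‖ ≤ R},
          ((stdGaussian k) (Metric.closedBall (x : EuclideanSpace ℝ (Fin k)) ρ)).toReal) :
    ∀ x : EuclideanSpace ℝ (Fin k), ‖x‖ ≤ R → F x ≠ Fhat x →
      ∃ z : EuclideanSpace ℝ (Fin k), ‖z‖ ≤ ρ ∧ Fhat (x + z) ≠ Fhat x := by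
  intro x hx hne
  by_contra! hconst
  set μ := stdGaussian k
  have hbalanced : β * (μ (Metric.closedBall x ρ)).toReal <
      (μ (Metric.closedBall x ρ ∩ {z | F z = F x})).toReal :=
    mul_lt_of_nonneg_of_lt_div hβ.1.le ENNReal.toReal_nonneg (hbal x hx ρ hρ.1 le_rfl)
  have hinf : ⨅ y : {y : EuclideanSpace ℝ (Fin k) // ‖y‖ ≤ R},
      (μ (Metric.closedBall (y : EuclideanSpace ℝ (Fin k)) ρ)).toReal ≤
      (μ (Metric.closedBall x ρ)).toReal :=
    ciInf_le ⟨0, by rintro _ ⟨y, rfl⟩; exact ENNReal.toReal_nonneg⟩ (⟨x, hx⟩ : {y // ‖y‖ ≤ R})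
  have := calc
    (μ (Metric.closedBall x ρ ∩ {z | F z = F x})).toReal
      ≤ (μ {z | F z ≠ Fhat z}).toReal :=
        measureReal_mono (closedBall_inter_level_subset_disagreement hconst hne)
    _ ≤ β * (μ (Metric.closedBall x ρ)).toReal :=
        hdis.trans (mul_le_mul_of_nonneg_left hinf hβ.1.le)
    _ < (μ (Metric.closedBall x ρ ∩ {z | F z = F x})).toReal := hbalanced
  exact lt_irrefl _ this

theorem stmt10 (k : ℕ) (F Fhat : EuclideanSpace ℝ (Fin k) → ℝ)
    (R ρ β : ℝ) (hR : 1 ≤ R) (hρ : ρ ∈ Set.Ioo (0 : ℝ) 1) (hβ : β ∈ Set.Ioo (0 : ℝ) 1)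
    -- `F` is `(R, ρ)`-locally `β`-balanced
    (hbal : ∀ x : EuclideanSpace ℝ (Fin k), ‖x‖ ≤ R → ∀ ρ', 0 < ρ' → ρ' ≤ ρ →
      β < ((stdGaussian k) (Metric.closedBall x ρ' ∩ {z | F z = F x})).toReal
            / ((stdGaussian k) (Metric.closedBall x ρ')).toReal)
    -- the disagreement between `F` and `Fhat` is at most `γ`
    (hdis : ((stdGaussian k) {z | F z ≠ Fhat z}).toReal
      ≤ β * ⨅ x : {x : EuclideanSpace ℝ (Fin k) // ‖x‖ ≤ R},
          ((stdGaussian k) (Metric.closedBall (x : EuclideanSpace ℝ (Fin k)) ρ)).toReal) :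
    ∀ x : EuclideanSpace ℝ (Fin k), ‖x‖ ≤ R → F x ≠ Fhat x →
      ∃ z : EuclideanSpace ℝ (Fin k), ‖z‖ ≤ ρ ∧ Fhat (x + z) ≠ Fhat x :=
  stmt10_general k F Fhat R ρ β hρ hβ hbal hdis
end

section
/- Let S, S' be finite multisets in ℝ^d. If there exists a halfspace h with frequency-weighted agreement (|S'|·P_{x∼U_{S'}}[h(x)=−1] + |S|·P_{x∼U_S}[h(x)=1])/(|S|+|S'|) ≥ 1 − ε, and both |S|/(|S|+|S'|) and |S'|/(|S|+|S'|) are within ε of 1/2, then disc_F(U_S, U_{S'}) ≥ 1 − 8ε, where F is the class of degree-k polynomial threshold functions (k ≥ 1) and disc_F(D₁,D₂) = sup_{f₁,f₂∈F} |P_{D₁}[f₁ ≠ f₂] − P_{D₂}[f₁ ≠ f₂]|. -/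
open scoped Classical

/-- The probability that a uniformly random element of the finite multiset `S`
satisfies the predicate `p`. -/
noncomputable def prMul {α : Type*} (S : Multiset α) (p : α → Prop) : ℝ :=
  (S.countP p : ℝ) / (Multiset.card S : ℝ)

/-- `f` is a degree-`k` polynomial threshold function on `ℝ^d`. -/
def IsPTF (d k : ℕ) (f : EuclideanSpace ℝ (Fin d) → ℝ) : Prop :=
  ∃ p : MvPolynomial (Fin d) ℝ, p.totalDegree ≤ k ∧
    ∀ x, f x = if 0 ≤ MvPolynomial.eval (fun i => x i) p then (1 : ℝ) else -1

/-- The discrepancy between the uniform distributions on `S` and `S'` with respect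
to the class `F`. -/
noncomputable def disc (d : ℕ) (F : Set (EuclideanSpace ℝ (Fin d) → ℝ))
    (S S' : Multiset (EuclideanSpace ℝ (Fin d))) : ℝ :=
  sSup {v : ℝ | ∃ f1 ∈ F, ∃ f2 ∈ F,
    v = |prMul S (fun x => f1 x ≠ f2 x) - prMul S' (fun x => f1 x ≠ f2 x)|}

/-!
Compare the halfspace `h` with the constant `1`: they disagree on the points of `S` that `h`
misclassifies and on the points of `S'` that `h` classifies correctly, so the discrepancy is at
least `a + a' - 1`, where `a`, `a'` are the accuracies of `h` on `S` and on `S'`. Since both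
multisets carry weight close to `1/2`, an overall accuracy of `1 - ε` forces each of `a`, `a'`
to be at least `1 - O(ε)`.
-/

section prMul

variable {α : Type*} (S : Multiset α) (p : α → Prop)

lemma prMul_nonneg : 0 ≤ prMul S p := by
  unfold prMul
  positivity

lemma prMul_le_one : prMul S p ≤ 1 :=
  div_le_one_of_le₀ (mod_cast Multiset.countP_le_card _ _) (Nat.cast_nonneg _)

lemma prMul_not {S} (hS : S ≠ 0) : prMul S (fun x => ¬ p x) = 1 - prMul S p := by
  have hcard : (Multiset.card S : ℝ) ≠ 0 := by simpa using hS
  rw [prMul, prMul, eq_sub_iff_add_eq, ← add_div, div_eq_one_iff_eq hcard,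
    Multiset.card_eq_countP_add_countP p S, Nat.cast_add, add_comm]
  -- the `Decidable` instances of `¬ p x` on the two sides differ
  congr

end prMul

section disc

variable {d : ℕ} {F : Set (EuclideanSpace ℝ (Fin d) → ℝ)}
  {S S' : Multiset (EuclideanSpace ℝ (Fin d))}

lemma le_disc {f₁ f₂ : EuclideanSpace ℝ (Fin d) → ℝ} (hf₁ : f₁ ∈ F) (hf₂ : f₂ ∈ F) :
    |prMul S (fun x => f₁ x ≠ f₂ x) - prMul S' (fun x => f₁ x ≠ f₂ x)| ≤ disc d F S S' := by
  refine le_csSup ⟨1, ?_⟩ ⟨f₁, hf₁, f₂, hf₂, rfl⟩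
  rintro v ⟨g₁, -, g₂, -, rfl⟩
  have := prMul_nonneg S (fun x => g₁ x ≠ g₂ x)
  have := prMul_le_one S (fun x => g₁ x ≠ g₂ x)
  have := prMul_nonneg S' (fun x => g₁ x ≠ g₂ x)
  have := prMul_le_one S' (fun x => g₁ x ≠ g₂ x)
  exact abs_sub_le_iff.2 ⟨by linarith, by linarith⟩

lemma disc_nonneg (hF : F.Nonempty) : 0 ≤ disc d F S S' :=
  let ⟨_, hf⟩ := hF
  (abs_nonneg _).trans (le_disc hf hf)

end disc

lemma isPTF_one (d k : ℕ) : IsPTF d k (fun _ => 1) :=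
  ⟨0, by simp, fun x => by simp⟩

lemma isPTF_halfspace {d k : ℕ} (hk : 1 ≤ k) (w : EuclideanSpace ℝ (Fin d)) (b : ℝ) :
    IsPTF d k (fun x => if 0 ≤ inner ℝ w x + b then 1 else -1) := by
  open MvPolynomial in
  refine ⟨∑ i, C (w i) * X i + C b, ?_, fun x => by simp [PiLp.inner_apply, mul_comm]⟩
  refine (totalDegree_add _ _).trans (max_le ?_ (by simp))
  refine (totalDegree_finsetSum _ _).trans (Finset.sup_le fun i _ => ?_)
  exact (totalDegree_mul _ _).trans (by simpa using hk)

lemma two_sub_eight_mul_le_add_of_weighted_mean {p q a a' ε : ℝ} (hpq : p + q ≤ 1)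
    (hp : 1 / 2 - ε ≤ p) (hq : 1 / 2 - ε ≤ q) (ha : a ≤ 1) (ha' : a' ≤ 1)
    (hmean : 1 - ε ≤ q * a' + p * a) (hε : ε ≤ 3 / 8) :
    2 - 8 * ε ≤ a + a' := by
  have hloss : (1 / 2 - ε) * ((1 - a) + (1 - a')) ≤ ε := by
    nlinarith [mul_le_mul_of_nonneg_right hp (sub_nonneg.2 ha),
      mul_le_mul_of_nonneg_right hq (sub_nonneg.2 ha')]
  nlinarith [mul_le_mul_of_nonneg_right (by linarith : 1 / 8 ≤ 1 / 2 - ε)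
    (by linarith : 0 ≤ (1 - a) + (1 - a'))]

theorem stmt15_general (d k : ℕ) (hk : 1 ≤ k) (ε : ℝ)
    (S S' : Multiset (EuclideanSpace ℝ (Fin d)))
    (w : EuclideanSpace ℝ (Fin d)) (b : ℝ) (h : EuclideanSpace ℝ (Fin d) → ℝ)
    -- `h` is a halfspace
    (hdef : ∀ x, h x = if 0 ≤ inner (𝕜 := ℝ) w x + b then (1 : ℝ) else -1)
    -- frequency-weighted agreement of `h` is at least `1 - ε`
    (hagree : 1 - ε ≤
      ((Multiset.card S' : ℝ) * prMul S' (fun x => h x = -1)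
          + (Multiset.card S : ℝ) * prMul S (fun x => h x = 1))
        / ((Multiset.card S : ℝ) + (Multiset.card S' : ℝ)))
    (hbalS : |(Multiset.card S : ℝ)
        / ((Multiset.card S : ℝ) + (Multiset.card S' : ℝ)) - 1 / 2| ≤ ε)
    (hbalS' : |(Multiset.card S' : ℝ)
        / ((Multiset.card S : ℝ) + (Multiset.card S' : ℝ)) - 1 / 2| ≤ ε) :
    1 - 8 * ε ≤ disc d {f | IsPTF d k f} S S' := by
  rcases le_or_gt 1 (8 * ε) with hε | hε
  · exact (sub_nonpos.2 hε).trans (disc_nonneg ⟨_, isPTF_one d k⟩)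
  have hh : IsPTF d k h := funext hdef ▸ isPTF_halfspace hk w b
  have hS : S ≠ 0 := by
    rintro rfl
    have := (abs_le.1 hbalS).1
    simp only [Multiset.card_zero, Nat.cast_zero, zero_div, zero_add] at this
    linarith
  have hne_one : ∀ x, h x ≠ 1 ↔ h x = -1 := fun x => by rw [hdef x]; split_ifs <;> norm_num
  have hmean := two_sub_eight_mul_le_add_of_weighted_mean (ε := ε)
    (p := Multiset.card S / ((Multiset.card S : ℝ) + Multiset.card S'))
    (q := Multiset.card S' / ((Multiset.card S : ℝ) + Multiset.card S'))
    (by rw [← add_div]; exact div_self_le_one _)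
    (by linarith [(abs_le.1 hbalS).1]) (by linarith [(abs_le.1 hbalS').1])
    (prMul_le_one S (h · = 1)) (prMul_le_one S' (h · = -1))
    (by rwa [add_div, mul_div_right_comm, mul_div_right_comm] at hagree) (by linarith)
  calc 1 - 8 * ε ≤ prMul S (h · = 1) + prMul S' (h · = -1) - 1 := by linarith
    _ ≤ |(1 - prMul S (h · = 1)) - prMul S' (h · = -1)| := by
        rw [abs_sub_comm]; exact (le_abs_self _).trans_eq' (by ring)
    _ = |prMul S (h · ≠ 1) - prMul S' (h · ≠ 1)| := by
        rw [prMul_not _ hS, funext fun x => propext (hne_one x)]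
    _ ≤ disc d {f | IsPTF d k f} S S' := le_disc hh (isPTF_one d k)

theorem stmt15 (d k : ℕ) (hk : 1 ≤ k) (ε : ℝ) (hε : 0 < ε)
    (S S' : Multiset (EuclideanSpace ℝ (Fin d)))
    (w : EuclideanSpace ℝ (Fin d)) (b : ℝ) (h : EuclideanSpace ℝ (Fin d) → ℝ)
    -- `h` is a halfspace
    (hdef : ∀ x, h x = if 0 ≤ inner (𝕜 := ℝ) w x + b then (1 : ℝ) else -1)
    -- frequency-weighted agreement of `h` is at least `1 - ε`
    (hagree : 1 - ε ≤
      ((Multiset.card S' : ℝ) * prMul S' (fun x => h x = -1)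
          + (Multiset.card S : ℝ) * prMul S (fun x => h x = 1))
        / ((Multiset.card S : ℝ) + (Multiset.card S' : ℝ)))
    (hbalS : |(Multiset.card S : ℝ)
        / ((Multiset.card S : ℝ) + (Multiset.card S' : ℝ)) - 1 / 2| ≤ ε)
    (hbalS' : |(Multiset.card S' : ℝ)
        / ((Multiset.card S : ℝ) + (Multiset.card S' : ℝ)) - 1 / 2| ≤ ε) :
    1 - 8 * ε ≤ disc d {f | IsPTF d k f} S S' :=
  stmt15_general d k hk ε S S' w b h hdef hagree hbalS hbalS'
end
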